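/- There exists a constant C > 0 such that for all sufficiently large n the following holds: if A is a tie-free n×n real matrix with unit Euclidean norm rows satisfying β(A) ≥ √(2·log(2n)) − log(log(2n))/√(2·log(2n)), then, writing α_i = |S_i(A)|/2^n, one has Σ_{i=1}^n (α_i − 1/(2n))² ≤ C·log(log(2n))/√(log(2n)). -/

import Mathlib

open Finset

noncomputable section
open scoped Classical

/-- The sign `±1` associated to a Boolean. -/
def sgn (b : Bool) : ℝ := if b then 1 else -1

/-- The hypercube `{-1,1}^n` as a finite set of vectors in `ℝ^n`. -/
def cube (n : ℕ) : Finset (Fin n → ℝ) :=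
  (Finset.univ : Finset (Fin n → Bool)).image (fun ε i => sgn (ε i))

/-- `β(A) = 2^{-n} ∑_{x ∈ {-1,1}^n} ‖Ax‖_∞` (the `Pi` norm on `Fin n → ℝ` is the sup norm). -/
def badBeta {n : ℕ} (A : Matrix (Fin n) (Fin n) ℝ) : ℝ :=
  (2 ^ n : ℝ)⁻¹ * ∑ x ∈ cube n, ‖A.mulVec x‖

/-- The cell `S_i(A) = {x ∈ {-1,1}^n : ‖Ax‖_∞ = ⟨a_i, x⟩}`. -/
def cellS {n : ℕ} (A : Matrix (Fin n) (Fin n) ℝ) (i : Fin n) : Finset (Fin n → ℝ) :=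
  (cube n).filter (fun x => ‖A.mulVec x‖ = ∑ j, A i j * x j)

/-- `A` is tie-free: no two distinct rows attain the same absolute inner product with a
hypercube vertex. -/
def TieFree {n : ℕ} (A : Matrix (Fin n) (Fin n) ℝ) : Prop :=
  ∀ x ∈ cube n, ∀ i j : Fin n, i ≠ j →
    (∑ k, A i k * x k) ^ 2 ≠ (∑ k, A j k * x k) ^ 2

/-- Level-1 Fourier weight of `f : {-1,1}^n → ℝ`. -/
def W1 {n : ℕ} (f : (Fin n → ℝ) → ℝ) : ℝ :=
  ∑ i : Fin n, ((2 ^ n : ℝ)⁻¹ * ∑ x ∈ cube n, f x * x i) ^ 2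

/-!
Tie-freeness makes the cells `S_i` and their reflections `-S_i` a partition of `{-1,1}^n`, so the
masses `α_i` sum to `1/2` and `β(A) = 2 ∑_i 2^{-n} ∑_{x ∈ S_i} ⟨a_i, x⟩`. Jensen's inequality for
`log` together with the Hoeffding bound `𝔼 e^{s⟨a,x⟩} ≤ e^{s²/2}` shows that a set of mass `α`
contributes at most `α (s/2 - log α / s)`. For `s = √(2 log 2n)` and `q = 1/(2n)` this equals
`α s - (α - q + KL(α, q)) / s`, hence `β(A) ≤ s - (2/s) ∑_i KL(α_i, q)`, and the hypothesis on
`β(A)` gives `∑_i KL(α_i, q) ≤ log log (2n) / 2`. Finally `s (α - q)² ≤ 4 KL(α, q)` for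
`α ≤ 1/2`: for `α ≤ 1/s` this is the Hellinger bound `(√α - √q)² ≤ KL(α, q)`, and for larger `α`
the term `α s² / 2` inside `KL(α, q)` dominates.
-/

open Real Matrix

lemma sgn_injective : Function.Injective sgn := by
  intro a b
  cases a <;> cases b <;> norm_num [sgn]

lemma sgn_not (b : Bool) : sgn (!b) = -sgn b := by
  cases b <;> simp [sgn]

lemma card_cube (n : ℕ) : (cube n).card = 2 ^ n := by
  rw [cube, card_image_of_injective _ fun ε ε' h => funext fun i => sgn_injective (congrFun h i)]
  simp

lemma neg_mem_cube {n : ℕ} {x : Fin n → ℝ} (hx : x ∈ cube n) : -x ∈ cube n := by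
  obtain ⟨ε, -, rfl⟩ := mem_image.1 hx
  exact mem_image.2 ⟨fun i => !ε i, mem_univ _, funext fun i => by simp [sgn_not]⟩

lemma neg_mem_cube_iff {n : ℕ} {x : Fin n → ℝ} : -x ∈ cube n ↔ x ∈ cube n :=
  ⟨fun h => neg_neg x ▸ neg_mem_cube h, neg_mem_cube⟩

lemma sum_cube_exp_le {n : ℕ} (a : Fin n → ℝ) (l : ℝ) :
    ∑ x ∈ cube n, exp (l * ∑ j, a j * x j) ≤ 2 ^ n * exp (l ^ 2 * (∑ j, a j ^ 2) / 2) := by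
  have hcosh (j : Fin n) : ∑ b : Bool, exp (l * (a j * sgn b)) = 2 * cosh (l * a j) := by
    simp only [Fintype.sum_bool, sgn, if_true, Bool.false_eq_true, if_false, cosh_eq]
    ring_nf
  calc ∑ x ∈ cube n, exp (l * ∑ j, a j * x j)
      = ∏ j, ∑ b : Bool, exp (l * (a j * sgn b)) := by
        rw [cube, sum_image fun ε _ ε' _ h => funext fun i => sgn_injective (congrFun h i),
          prod_univ_sum, Fintype.piFinset_univ]
        simp only [mul_sum, exp_sum]
    _ ≤ ∏ j, 2 * exp ((l * a j) ^ 2 / 2) := by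
        gcongr with j
        rw [hcosh]
        gcongr
        exact cosh_le_exp_half_sq _
    _ = 2 ^ n * exp (l ^ 2 * (∑ j, a j ^ 2) / 2) := by
        rw [prod_mul_distrib, prod_const, card_univ, Fintype.card_fin, ← exp_sum, mul_sum,
          sum_div]
        simp only [mul_pow]

lemma sum_le_card_mul_log_div {ι : Type*} {S : Finset ι} (hS : S.Nonempty) (g : ι → ℝ) {Z : ℝ}
    (hZ : ∑ x ∈ S, exp (g x) ≤ Z) : ∑ x ∈ S, g x ≤ S.card * log (Z / S.card) := by
  have hcard : (0 : ℝ) < S.card := by exact_mod_cast hS.card_pos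
  have hw : ∑ _x ∈ S, (S.card : ℝ)⁻¹ = 1 := by
    rw [sum_const, nsmul_eq_mul, mul_inv_cancel₀ hcard.ne']
  have jensen := strictConcaveOn_log_Ioi.concaveOn.le_map_sum (t := S) (p := fun x => exp (g x))
    (fun _ _ => by positivity) hw (fun _ _ => exp_pos _)
  simp only [smul_eq_mul, log_exp, ← mul_sum] at jensen
  calc ∑ x ∈ S, g x = S.card * ((S.card : ℝ)⁻¹ * ∑ x ∈ S, g x) := by field_simp
    _ ≤ S.card * log ((S.card : ℝ)⁻¹ * ∑ x ∈ S, exp (g x)) := by gcongr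
    _ ≤ S.card * log (Z / S.card) := by
        gcongr
        rw [inv_mul_eq_div]
        gcongr

lemma sum_inner_le_of_subset_cube {n : ℕ} (a : Fin n → ℝ) (ha : ∑ j, a j ^ 2 = 1)
    {S : Finset (Fin n → ℝ)} (hS : S ⊆ cube n) {l : ℝ} (hl : 0 < l) :
    (2 ^ n : ℝ)⁻¹ * ∑ x ∈ S, ∑ j, a j * x j ≤
      S.card / 2 ^ n * (l / 2 - log (S.card / 2 ^ n) / l) := by
  rcases S.eq_empty_or_nonempty with rfl | hne
  · simp
  set α : ℝ := S.card / 2 ^ n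
  have hZ : ∑ x ∈ S, exp (l * ∑ j, a j * x j) ≤ 2 ^ n * exp (l ^ 2 / 2) := by
    refine (sum_le_sum_of_subset_of_nonneg hS fun _ _ _ => (exp_pos _).le).trans ?_
    simpa [ha] using sum_cube_exp_le a l
  have hgibbs := sum_le_card_mul_log_div hne _ hZ
  have hlog : log (2 ^ n * exp (l ^ 2 / 2) / S.card) = l ^ 2 / 2 - log α := by
    rw [mul_div_right_comm, ← inv_div, log_mul (by positivity) (exp_pos _).ne', log_inv, log_exp]
    ring
  rw [hlog, ← mul_sum] at hgibbs
  have hcard : (S.card : ℝ) = 2 ^ n * α := (mul_div_cancel₀ _ (by positivity)).symm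
  rw [hcard] at hgibbs
  rw [← mul_le_mul_iff_of_pos_left (show (0 : ℝ) < 2 ^ n * l by positivity)]
  calc 2 ^ n * l * ((2 ^ n : ℝ)⁻¹ * ∑ x ∈ S, ∑ j, a j * x j)
      = l * ∑ x ∈ S, ∑ j, a j * x j := by field_simp
    _ ≤ 2 ^ n * α * (l ^ 2 / 2 - log α) := hgibbs
    _ = 2 ^ n * l * (α * (l / 2 - log α / l)) := by field_simp

section Cells

variable {n : ℕ} {A : Matrix (Fin n) (Fin n) ℝ} {i : Fin n} {x : Fin n → ℝ}

lemma mem_cellS_iff : x ∈ cellS A i ↔ x ∈ cube n ∧ ‖A *ᵥ x‖ = (A *ᵥ x) i :=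
  mem_filter

lemma cellS_subset_cube : cellS A i ⊆ cube n :=
  filter_subset _ _

lemma neg_mem_cellS_iff : -x ∈ cellS A i ↔ x ∈ cube n ∧ ‖A *ᵥ x‖ = -(A *ᵥ x) i := by
  rw [mem_cellS_iff, neg_mem_cube_iff, Matrix.mulVec_neg, norm_neg, Pi.neg_apply]

lemma TieFree.sq_ne (htf : TieFree A) (hx : x ∈ cube n) {j : Fin n} (hij : i ≠ j) :
    (A *ᵥ x) i ^ 2 ≠ (A *ᵥ x) j ^ 2 :=
  htf x hx i j hij

lemma TieFree.norm_mulVec_pos (htf : TieFree A) (hn : 2 ≤ n) (hx : x ∈ cube n) :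
    0 < ‖A *ᵥ x‖ := by
  by_contra! h
  have hzero : A *ᵥ x = 0 := norm_le_zero_iff.1 h
  exact htf.sq_ne hx (i := ⟨0, by omega⟩) (j := ⟨1, by omega⟩) (by simp) (by simp [hzero])

lemma exists_mem_cellS_or_neg_mem_cellS (hn : 0 < n) (A : Matrix (Fin n) (Fin n) ℝ)
    (hx : x ∈ cube n) : ∃ i, x ∈ cellS A i ∨ -x ∈ cellS A i := by
  obtain ⟨i, -, hi⟩ := exists_max_image univ (fun i => ‖(A *ᵥ x) i‖) ⟨⟨0, hn⟩, mem_univ _⟩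
  have hnorm : ‖A *ᵥ x‖ = ‖(A *ᵥ x) i‖ :=
    le_antisymm ((pi_norm_le_iff_of_nonneg (norm_nonneg _)).2 fun j => hi j (mem_univ j))
      (norm_le_pi_norm _ i)
  refine ⟨i, ?_⟩
  rw [mem_cellS_iff, neg_mem_cellS_iff, hnorm, Real.norm_eq_abs]
  rcases abs_choice ((A *ᵥ x) i) with h | h <;> simp [h, hx]

def symmCell (A : Matrix (Fin n) (Fin n) ℝ) (i : Fin n) : Finset (Fin n → ℝ) :=
  cellS A i ∪ (cellS A i).map (Equiv.neg _).toEmbedding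

lemma mem_symmCell : x ∈ symmCell A i ↔ x ∈ cellS A i ∨ -x ∈ cellS A i := by
  simp [symmCell, mem_map_equiv]

lemma sq_mulVec_apply_of_mem_symmCell (hx : x ∈ symmCell A i) :
    x ∈ cube n ∧ (A *ᵥ x) i ^ 2 = ‖A *ᵥ x‖ ^ 2 := by
  rcases mem_symmCell.1 hx with h | h
  · obtain ⟨hx, h⟩ := mem_cellS_iff.1 h
    exact ⟨hx, by rw [h]⟩
  · obtain ⟨hx, h⟩ := neg_mem_cellS_iff.1 h
    exact ⟨hx, by rw [h, neg_sq]⟩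

lemma cube_eq_biUnion_symmCell (hn : 0 < n) (A : Matrix (Fin n) (Fin n) ℝ) :
    cube n = univ.biUnion (symmCell A) := by
  ext x
  simp only [mem_biUnion, mem_univ, true_and, mem_symmCell]
  exact ⟨exists_mem_cellS_or_neg_mem_cellS hn A,
    fun ⟨i, hi⟩ => (sq_mulVec_apply_of_mem_symmCell (mem_symmCell.2 hi)).1⟩

lemma TieFree.pairwiseDisjoint_symmCell (htf : TieFree A) :
    ((univ : Finset (Fin n)) : Set (Fin n)).PairwiseDisjoint (symmCell A) := by
  intro i _ j _ hij
  refine disjoint_left.2 fun x hxi hxj => ?_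
  obtain ⟨hx, hi⟩ := sq_mulVec_apply_of_mem_symmCell hxi
  exact htf.sq_ne hx hij (hi.trans (sq_mulVec_apply_of_mem_symmCell hxj).2.symm)

lemma TieFree.disjoint_cellS_neg (htf : TieFree A) (hn : 2 ≤ n) (i : Fin n) :
    Disjoint (cellS A i) ((cellS A i).map (Equiv.neg _).toEmbedding) := by
  refine disjoint_left.2 fun x hpos hneg => ?_
  obtain ⟨hx, hpos⟩ := mem_cellS_iff.1 hpos
  obtain ⟨-, hneg⟩ := neg_mem_cellS_iff.1 (mem_map_equiv.1 hneg)
  linarith [htf.norm_mulVec_pos hn hx]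

lemma TieFree.sum_cube_eq_two_mul_sum_cellS (htf : TieFree A) (hn : 2 ≤ n)
    (f : (Fin n → ℝ) → ℝ) (hf : ∀ x, f (-x) = f x) :
    ∑ x ∈ cube n, f x = 2 * ∑ i, ∑ x ∈ cellS A i, f x := by
  rw [cube_eq_biUnion_symmCell (by omega) A, sum_biUnion htf.pairwiseDisjoint_symmCell, mul_sum]
  refine sum_congr rfl fun i _ => ?_
  rw [symmCell, sum_union (htf.disjoint_cellS_neg hn i), sum_map]
  simp [hf, two_mul]

end Cells

def klDiv (a q : ℝ) : ℝ := a * log (a / q) - a + q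

lemma sq_sqrt_sub_sqrt_le_klDiv {a q : ℝ} (ha : 0 ≤ a) (hq : 0 < q) :
    (√a - √q) ^ 2 ≤ klDiv a q := by
  rcases ha.eq_or_lt with rfl | ha
  · simp [klDiv, sq_sqrt hq.le]
  obtain ⟨u, hu, rfl⟩ : ∃ u, 0 < u ∧ a = u ^ 2 := ⟨√a, sqrt_pos.2 ha, (sq_sqrt ha.le).symm⟩
  obtain ⟨v, hv, rfl⟩ : ∃ v, 0 < v ∧ q = v ^ 2 := ⟨√q, sqrt_pos.2 hq, (sq_sqrt hq.le).symm⟩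
  have hlog : 1 - v / u ≤ log (u / v) := by
    simpa using one_sub_inv_le_log_of_pos (div_pos hu hv)
  have hsq : log (u ^ 2 / v ^ 2) = 2 * log (u / v) := by rw [← div_pow, log_pow]; norm_num
  have hu2 : u ^ 2 * (1 - v / u) = u ^ 2 - u * v := by field_simp
  rw [sqrt_sq hu.le, sqrt_sq hv.le, klDiv, hsq]
  nlinarith [mul_le_mul_of_nonneg_left hlog (sq_nonneg u)]

lemma sq_sub_le_two_mul_add_mul_klDiv {a q : ℝ} (ha : 0 ≤ a) (hq : 0 < q) :
    (a - q) ^ 2 ≤ 2 * (a + q) * klDiv a q := by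
  have hfactor : (a - q) ^ 2 = (√a - √q) ^ 2 * (√a + √q) ^ 2 := by
    rw [← mul_pow, mul_comm, ← sq_sub_sq, sq_sqrt ha, sq_sqrt hq.le]
  have hsum : (√a + √q) ^ 2 ≤ 2 * (a + q) := by
    nlinarith [sq_nonneg (√a - √q), sq_sqrt ha, sq_sqrt hq.le]
  rw [hfactor, mul_comm (2 * (a + q))]
  exact mul_le_mul (sq_sqrt_sub_sqrt_le_klDiv ha hq) hsum (sq_nonneg _)
    ((sq_nonneg _).trans (sq_sqrt_sub_sqrt_le_klDiv ha hq))

lemma mul_half_sub_log_div_eq {a q s : ℝ} (hs : s ≠ 0) (hq : 0 < q)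
    (hlogq : log q = -(s ^ 2 / 2)) :
    a * (s / 2 - log a / s) = a * s - (a - q + klDiv a q) / s := by
  have hlog : a * log (a / q) = a * log a + a * (s ^ 2 / 2) := by
    rcases eq_or_ne a 0 with rfl | ha
    · simp
    rw [log_div ha hq.ne', hlogq]
    ring
  have hsum : a - q + klDiv a q = a * log a + a * (s ^ 2 / 2) := by
    rw [klDiv, ← hlog]
    ring
  rw [hsum]
  field_simp
  ring

lemma sq_sub_le_klDiv {a q s : ℝ} (hs : 4 ≤ s) (hq : 0 < q) (hlogq : log q = -(s ^ 2 / 2))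
    (ha : 0 ≤ a) (ha' : a ≤ 1 / 2) :
    s * (a - q) ^ 2 ≤ 4 * klDiv a q := by
  have hs0 : 0 < s := by linarith
  have hqs : q ≤ 1 / s := by
    rw [← exp_log hq, hlogq, exp_neg, le_div_iff₀ hs0, inv_mul_le_iff₀ (exp_pos _), mul_one]
    nlinarith [add_one_le_exp (s ^ 2 / 2)]
  rcases le_or_gt a (1 / s) with has | has
  · have h := sq_sub_le_two_mul_add_mul_klDiv ha hq
    have hk : 0 ≤ klDiv a q := (sq_nonneg _).trans (sq_sqrt_sub_sqrt_le_klDiv ha hq)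
    have hsum : s * (2 * (a + q)) ≤ 4 := by
      rw [le_div_iff₀ hs0] at has hqs
      linarith
    calc s * (a - q) ^ 2 ≤ s * (2 * (a + q) * klDiv a q) := by gcongr
      _ ≤ 4 * klDiv a q := by rw [← mul_assoc]; exact mul_le_mul_of_nonneg_right hsum hk
  · have hqa : q ≤ a := hqs.trans has.le
    have hloga : -log s ≤ log a := by
      rw [← log_inv, ← one_div]
      exact log_le_log (by positivity) has.le
    have hlogs : log s ≤ s - 1 := log_le_sub_one_of_pos hs0
    have hk : a * (s ^ 2 / 2 - s) ≤ klDiv a q := by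
      rw [klDiv, log_div (by linarith) hq.ne', hlogq]
      nlinarith
    have hsq : (a - q) ^ 2 ≤ a / 2 := by nlinarith
    calc s * (a - q) ^ 2 ≤ s * (a / 2) := by gcongr
      _ ≤ 4 * (a * (s ^ 2 / 2 - s)) := by
          nlinarith [mul_nonneg ha (show 0 ≤ s * (2 * s - 9 / 2) by nlinarith)]
      _ ≤ 4 * klDiv a q := by gcongr

section Mass

variable {n : ℕ} {A : Matrix (Fin n) (Fin n) ℝ}

/-- The mass `α_i` of the statement. -/
def cellMass (A : Matrix (Fin n) (Fin n) ℝ) (i : Fin n) : ℝ := (cellS A i).card / 2 ^ n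

lemma TieFree.sum_cellMass (htf : TieFree A) (hn : 2 ≤ n) : ∑ i, cellMass A i = 1 / 2 := by
  have h := htf.sum_cube_eq_two_mul_sum_cellS hn (fun _ => (1 : ℝ)) fun _ => rfl
  simp only [sum_const, card_cube, nsmul_eq_mul, mul_one] at h
  simp only [cellMass, ← sum_div]
  field_simp
  push_cast at h
  linarith

lemma cellMass_nonneg (i : Fin n) : 0 ≤ cellMass A i := by
  unfold cellMass
  positivity

lemma TieFree.cellMass_le_half (htf : TieFree A) (hn : 2 ≤ n) (i : Fin n) :
    cellMass A i ≤ 1 / 2 :=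
  (single_le_sum (fun j _ => cellMass_nonneg j) (mem_univ i)).trans_eq (htf.sum_cellMass hn)

lemma TieFree.badBeta_eq (htf : TieFree A) (hn : 2 ≤ n) :
    badBeta A = 2 * ∑ i, (2 ^ n : ℝ)⁻¹ * ∑ x ∈ cellS A i, ∑ j, A i j * x j := by
  rw [badBeta, htf.sum_cube_eq_two_mul_sum_cellS hn _ fun x => by rw [mulVec_neg, norm_neg],
    ← mul_sum]
  have hcell (i : Fin n) : ∑ x ∈ cellS A i, ‖A *ᵥ x‖ = ∑ x ∈ cellS A i, ∑ j, A i j * x j :=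
    sum_congr rfl fun x hx => (mem_cellS_iff.1 hx).2
  simp only [hcell]
  ring

lemma TieFree.badBeta_le (htf : TieFree A) (hn : 2 ≤ n) (hA : ∀ i, ∑ j, A i j ^ 2 = 1)
    {s : ℝ} (hs : 0 < s) (hlog : log (2 * n) = s ^ 2 / 2) :
    badBeta A ≤ s - 2 / s * ∑ i, klDiv (cellMass A i) (1 / (2 * n)) := by
  have hq : (0 : ℝ) < 1 / (2 * n) := by positivity
  have hlogq : log (1 / (2 * n)) = -(s ^ 2 / 2) := by rw [one_div, log_inv, hlog]
  calc badBeta A ≤ 2 * ∑ i, cellMass A i * (s / 2 - log (cellMass A i) / s) := by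
        rw [htf.badBeta_eq hn]
        refine mul_le_mul_of_nonneg_left (sum_le_sum fun i _ => ?_) zero_le_two
        exact sum_inner_le_of_subset_cube _ (hA i) cellS_subset_cube hs
    _ = s - 2 / s * ∑ i, klDiv (cellMass A i) (1 / (2 * n)) := by
        simp only [mul_half_sub_log_div_eq hs.ne' hq hlogq, sum_sub_distrib, ← sum_div,
          ← sum_mul, sum_add_distrib, htf.sum_cellMass hn, sum_const, card_univ, Fintype.card_fin,
          nsmul_eq_mul]
        field_simp
        ring

end Mass

theorem stmt8 : ∃ C : ℝ, 0 < C ∧ ∃ N : ℕ, ∀ n : ℕ, N ≤ n →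
    ∀ A : Matrix (Fin n) (Fin n) ℝ,
    (∀ i, ∑ j, (A i j) ^ 2 = 1) → TieFree A →
    Real.sqrt (2 * Real.log (2 * n)) -
        Real.log (Real.log (2 * n)) / Real.sqrt (2 * Real.log (2 * n)) ≤ badBeta A →
    ∑ i : Fin n, (((cellS A i).card : ℝ) / 2 ^ n - 1 / (2 * n)) ^ 2 ≤
      C * Real.log (Real.log (2 * n)) / Real.sqrt (Real.log (2 * n)) := by
  refine ⟨√2, by positivity, ⌈exp 8⌉₊, fun n hN A hA htf hβ => ?_⟩
  have hN' : exp 8 ≤ n := (Nat.le_ceil _).trans (by exact_mod_cast hN)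
  have hn : 2 ≤ n := by exact_mod_cast (by linarith [add_one_le_exp 8] : (2 : ℝ) ≤ n)
  set L := log (2 * n)
  have hL : 8 ≤ L := (le_log_iff_exp_le (by positivity)).2 (by linarith)
  set s := √(2 * L)
  have hsq : s ^ 2 = 2 * L := sq_sqrt (by linarith)
  have hs : 4 ≤ s := by nlinarith [sqrt_nonneg (2 * L)]
  have hq : (0 : ℝ) < 1 / (2 * n) := by positivity
  have hlogq : log (1 / (2 * n)) = -(s ^ 2 / 2) := by rw [one_div, log_inv, hsq]; ring
  have hK : ∑ i, klDiv (cellMass A i) (1 / (2 * n)) ≤ log L / 2 := by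
    have hbeta := hβ.trans (htf.badBeta_le hn hA (s := s) (by linarith) (by rw [hsq]; ring))
    rw [sub_le_sub_iff_left, div_mul_eq_mul_div, div_le_div_iff_of_pos_right (by linarith)] at hbeta
    linarith
  calc ∑ i, (cellMass A i - 1 / (2 * n)) ^ 2
      ≤ ∑ i, 4 / s * klDiv (cellMass A i) (1 / (2 * n)) := by
        gcongr with i
        rw [div_mul_eq_mul_div, le_div_iff₀ (by linarith), mul_comm]
        exact sq_sub_le_klDiv hs hq hlogq (cellMass_nonneg i) (htf.cellMass_le_half hn i)
    _ ≤ 4 / s * (log L / 2) := by rw [← mul_sum]; gcongr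
    _ = √2 * log L / √L := by
        rw [show s = √2 * √L from sqrt_mul (by norm_num) L]
        field_simp
        rw [sq_sqrt zero_le_two]
        ring
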